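/- Let M be a finite-dimensional (α,β)-Yetter-Drinfeld module and N a finite-dimensional (γ,δ)-Yetter-Drinfeld module. Then the map Ψ : N* ⊗̂ M* → (M ⊗̂ N)*, defined by Ψ(n*⊗m*)(m⊗n) = m*(m)n*(n), is an isomorphism (a bijective H-linear and H-colinear map) of (γ⁻¹α⁻¹, αβ⁻¹γδ⁻¹γ⁻¹α⁻¹)-Yetter-Drinfeld modules. -/

import Mathlib

open TensorProduct

noncomputable section

namespace GYD

variable (k H : Type) [Field k] [Ring H] [HopfAlgebra k H]

/-- `φ` is a Hopf algebra automorphism of `H` (a linear equivalence which is both an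
algebra morphism and a coalgebra morphism). -/
def IsHopfAut (φ : H ≃ₗ[k] H) : Prop :=
  (∀ x y : H, φ (x * y) = φ x * φ y) ∧ (φ 1 = 1) ∧
  (∀ h : H, Coalgebra.comul (R := k) (φ h)
      = TensorProduct.map φ.toLinearMap φ.toLinearMap (Coalgebra.comul (R := k) h)) ∧
  (∀ h : H, Coalgebra.counit (R := k) (φ h) = Coalgebra.counit (R := k) h)

/-- `Sinv` is a two-sided inverse of the antipode of `H`. -/
def IsAntipodeInv (Sinv : H → H) : Prop :=
  (∀ h : H, HopfAlgebra.antipode (R := k) (Sinv h) = h) ∧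
  (∀ h : H, Sinv (HopfAlgebra.antipode (R := k) h) = h)

/-- The data `(act, coact)` makes `M` an `(α, β)`-Yetter-Drinfeld module over `H`:
`M` is a left `H`-module, a right `H`-comodule, and the compatibility
`(h·m)₍₀₎ ⊗ (h·m)₍₁₎ = h₂·m₍₀₎ ⊗ β(h₃) m₍₁₎ α(Sinv(h₁))` holds (expressed via
arbitrary finite representations of `(Δ ⊗ id)(Δ h)` and of `coact m`). -/
def IsYD (Sinv α β : H → H) {M : Type} [AddCommGroup M] [Module k M]
    (act : H →ₗ[k] M →ₗ[k] M) (coact : M →ₗ[k] M ⊗[k] H) : Prop :=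
  (∀ m : M, act 1 m = m) ∧
  (∀ (g h : H) (m : M), act (g * h) m = act g (act h m)) ∧
  (∀ m : M, LinearMap.rTensor H coact (coact m)
      = (TensorProduct.assoc k M H H).symm
          (LinearMap.lTensor M (Coalgebra.comul (R := k)) (coact m))) ∧
  (∀ m : M,
    TensorProduct.rid k M (LinearMap.lTensor M (Coalgebra.counit (R := k)) (coact m)) = m) ∧
  (∀ (h : H) (m : M) (s t : Finset ℕ) (a b c : ℕ → H) (m₀ : ℕ → M) (m₁ : ℕ → H),
    LinearMap.rTensor H (Coalgebra.comul (R := k)) (Coalgebra.comul (R := k) h)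
        = ∑ i ∈ s, (a i ⊗ₜ[k] b i) ⊗ₜ[k] c i →
    coact m = ∑ j ∈ t, m₀ j ⊗ₜ[k] m₁ j →
    coact (act h m) = ∑ i ∈ s, ∑ j ∈ t,
      act (b i) (m₀ j) ⊗ₜ[k] (β (c i) * m₁ j * α (Sinv (a i))))

/-- Characterization of the action `h · (m ⊗ n) = θ₁(h₁)·m ⊗ θ₂(h₂)·n` on `M ⊗ N`. -/
def TensorActChar (θ₁ θ₂ : H → H) {M N : Type} [AddCommGroup M] [Module k M]
    [AddCommGroup N] [Module k N]
    (actM : H →ₗ[k] M →ₗ[k] M) (actN : H →ₗ[k] N →ₗ[k] N)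
    (act : H →ₗ[k] (M ⊗[k] N) →ₗ[k] (M ⊗[k] N)) : Prop :=
  ∀ (h : H) (m : M) (n : N) (s : Finset ℕ) (p q : ℕ → H),
    Coalgebra.comul (R := k) h = ∑ i ∈ s, p i ⊗ₜ[k] q i →
    act h (m ⊗ₜ[k] n) = ∑ i ∈ s, actM (θ₁ (p i)) m ⊗ₜ[k] actN (θ₂ (q i)) n

/-- Characterization of the "type two" action `h · (m ⊗ n) = h₂·m ⊗ h₁·n` on `M ⊗ N`. -/
def TensorActCharTwo {M N : Type} [AddCommGroup M] [Module k M]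
    [AddCommGroup N] [Module k N]
    (actM : H →ₗ[k] M →ₗ[k] M) (actN : H →ₗ[k] N →ₗ[k] N)
    (act : H →ₗ[k] (M ⊗[k] N) →ₗ[k] (M ⊗[k] N)) : Prop :=
  ∀ (h : H) (m : M) (n : N) (s : Finset ℕ) (p q : ℕ → H),
    Coalgebra.comul (R := k) h = ∑ i ∈ s, p i ⊗ₜ[k] q i →
    act h (m ⊗ₜ[k] n) = ∑ i ∈ s, actM (q i) m ⊗ₜ[k] actN (p i) n

/-- Characterization of the coaction `m ⊗ n ↦ (m₍₀₎ ⊗ n₍₀₎) ⊗ n₍₁₎ m₍₁₎` on `M ⊗ N`. -/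
def TensorCoactChar {M N : Type} [AddCommGroup M] [Module k M]
    [AddCommGroup N] [Module k N]
    (coactM : M →ₗ[k] M ⊗[k] H) (coactN : N →ₗ[k] N ⊗[k] H)
    (coact : M ⊗[k] N →ₗ[k] (M ⊗[k] N) ⊗[k] H) : Prop :=
  ∀ (m : M) (n : N) (s t : Finset ℕ) (m₀ : ℕ → M) (m₁ : ℕ → H) (n₀ : ℕ → N) (n₁ : ℕ → H),
    coactM m = ∑ i ∈ s, m₀ i ⊗ₜ[k] m₁ i →
    coactN n = ∑ j ∈ t, n₀ j ⊗ₜ[k] n₁ j →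
    coact (m ⊗ₜ[k] n) = ∑ i ∈ s, ∑ j ∈ t, (m₀ i ⊗ₜ[k] n₀ j) ⊗ₜ[k] (n₁ j * m₁ i)

/-- Characterization of the "type two" coaction `m ⊗ n ↦ (m₍₀₎ ⊗ n₍₀₎) ⊗ m₍₁₎ n₍₁₎`. -/
def TensorCoactCharTwo {M N : Type} [AddCommGroup M] [Module k M]
    [AddCommGroup N] [Module k N]
    (coactM : M →ₗ[k] M ⊗[k] H) (coactN : N →ₗ[k] N ⊗[k] H)
    (coact : M ⊗[k] N →ₗ[k] (M ⊗[k] N) ⊗[k] H) : Prop :=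
  ∀ (m : M) (n : N) (s t : Finset ℕ) (m₀ : ℕ → M) (m₁ : ℕ → H) (n₀ : ℕ → N) (n₁ : ℕ → H),
    coactM m = ∑ i ∈ s, m₀ i ⊗ₜ[k] m₁ i →
    coactN n = ∑ j ∈ t, n₀ j ⊗ₜ[k] n₁ j →
    coact (m ⊗ₜ[k] n) = ∑ i ∈ s, ∑ j ∈ t, (m₀ i ⊗ₜ[k] n₀ j) ⊗ₜ[k] (m₁ i * n₁ j)

/-- Characterization of the action `(h · f)(m) = f (θ(h) · m)` on the dual space. -/
def DualActChar (θ : H → H) {M : Type} [AddCommGroup M] [Module k M]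
    (actM : H →ₗ[k] M →ₗ[k] M)
    (actD : H →ₗ[k] Module.Dual k M →ₗ[k] Module.Dual k M) : Prop :=
  ∀ (h : H) (f : Module.Dual k M) (m : M), actD h f m = f (actM (θ h) m)

/-- Characterization of the coaction `f₍₀₎(m) ⊗ f₍₁₎ = f(m₍₀₎) ⊗ σ(m₍₁₎)` on the dual space
(expressed through contraction against evaluation at each `m`). -/
def DualCoactChar (σ : H → H) {M : Type} [AddCommGroup M] [Module k M]
    (coactM : M →ₗ[k] M ⊗[k] H)
    (coactD : Module.Dual k M →ₗ[k] Module.Dual k M ⊗[k] H) : Prop :=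
  ∀ (f : Module.Dual k M) (m : M) (t : Finset ℕ) (m₀ : ℕ → M) (m₁ : ℕ → H),
    coactM m = ∑ j ∈ t, m₀ j ⊗ₜ[k] m₁ j →
    TensorProduct.lid k H (LinearMap.rTensor H (Module.Dual.eval k M m) (coactD f))
      = ∑ j ∈ t, f (m₀ j) • σ (m₁ j)

/-- Characterization of the action `(h · u)(m) = θ(h₁) · u (θ(S(h₂)) · m)` on `End(M)`. -/
def EndActChar (θ : H → H) {M : Type} [AddCommGroup M] [Module k M]
    (actM : H →ₗ[k] M →ₗ[k] M)
    (actE : H →ₗ[k] Module.End k M →ₗ[k] Module.End k M) : Prop :=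
  ∀ (h : H) (u : Module.End k M) (m : M) (s : Finset ℕ) (p q : ℕ → H),
    Coalgebra.comul (R := k) h = ∑ i ∈ s, p i ⊗ₜ[k] q i →
    actE h u m = ∑ i ∈ s,
      actM (θ (p i)) (u (actM (θ (HopfAlgebra.antipode (R := k) (q i))) m))

/-- Characterization of the coaction `u₍₀₎(m) ⊗ u₍₁₎ = u(m₍₀₎)₍₀₎ ⊗ Sinv(m₍₁₎) u(m₍₀₎)₍₁₎`
on `End(M)`, expressed through contraction against evaluation at each `m`. -/
def EndCoactChar (Sinv : H → H) {M : Type} [AddCommGroup M] [Module k M]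
    (coactM : M →ₗ[k] M ⊗[k] H)
    (coactE : Module.End k M →ₗ[k] Module.End k M ⊗[k] H) : Prop :=
  ∀ (u : Module.End k M) (m : M) (t : Finset ℕ) (m₀ : ℕ → M) (m₁ : ℕ → H)
    (r : ℕ → Finset ℕ) (n₀ : ℕ → ℕ → M) (n₁ : ℕ → ℕ → H),
    coactM m = ∑ j ∈ t, m₀ j ⊗ₜ[k] m₁ j →
    (∀ j ∈ t, coactM (u (m₀ j)) = ∑ l ∈ r j, n₀ j l ⊗ₜ[k] n₁ j l) →
    LinearMap.rTensor H (LinearMap.applyₗ (R := k) m) (coactE u)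
      = ∑ j ∈ t, ∑ l ∈ r j, n₀ j l ⊗ₜ[k] (Sinv (m₁ j) * n₁ j l)

/-- Characterization of the action `(h · u)(m) = θ(h₂) · u (θ(Sinv(h₁)) · m)` on `End(M)ᵒᵖ`. -/
def EndOpActChar (θ Sinv : H → H) {M : Type} [AddCommGroup M] [Module k M]
    (actM : H →ₗ[k] M →ₗ[k] M)
    (actE : H →ₗ[k] (Module.End k M)ᵐᵒᵖ →ₗ[k] (Module.End k M)ᵐᵒᵖ) : Prop :=
  ∀ (h : H) (u : (Module.End k M)ᵐᵒᵖ) (m : M) (s : Finset ℕ) (p q : ℕ → H),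
    Coalgebra.comul (R := k) h = ∑ i ∈ s, p i ⊗ₜ[k] q i →
    (actE h u).unop m = ∑ i ∈ s,
      actM (θ (q i)) (u.unop (actM (θ (Sinv (p i))) m))

/-- Characterization of the coaction `u₍₀₎(m) ⊗ u₍₁₎ = u(m₍₀₎)₍₀₎ ⊗ u(m₍₀₎)₍₁₎ S(m₍₁₎)`
on `End(M)ᵒᵖ`, expressed through contraction against evaluation at each `m`. -/
def EndOpCoactChar {M : Type} [AddCommGroup M] [Module k M]
    (coactM : M →ₗ[k] M ⊗[k] H)
    (coactE : (Module.End k M)ᵐᵒᵖ →ₗ[k] (Module.End k M)ᵐᵒᵖ ⊗[k] H) : Prop :=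
  ∀ (u : (Module.End k M)ᵐᵒᵖ) (m : M) (t : Finset ℕ) (m₀ : ℕ → M) (m₁ : ℕ → H)
    (r : ℕ → Finset ℕ) (n₀ : ℕ → ℕ → M) (n₁ : ℕ → ℕ → H),
    coactM m = ∑ j ∈ t, m₀ j ⊗ₜ[k] m₁ j →
    (∀ j ∈ t, coactM (u.unop (m₀ j)) = ∑ l ∈ r j, n₀ j l ⊗ₜ[k] n₁ j l) →
    LinearMap.rTensor H ((LinearMap.applyₗ (R := k) m).comp
        (MulOpposite.opLinearEquiv k).symm.toLinearMap) (coactE u)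
      = ∑ j ∈ t, ∑ l ∈ r j,
          n₀ j l ⊗ₜ[k] (n₁ j l * HopfAlgebra.antipode (R := k) (m₁ j))

/-- `A`, with the Yetter-Drinfeld structure `(act, coact)`, is an algebra in the braided
category of Yetter-Drinfeld modules over `H`. -/
def IsYDAlgebra (Sinv : H → H) {A : Type} [Ring A] [Algebra k A]
    (act : H →ₗ[k] A →ₗ[k] A) (coact : A →ₗ[k] A ⊗[k] H) : Prop :=
  IsYD k H Sinv id id act coact ∧
  (∀ (h : H) (a b : A) (s : Finset ℕ) (p q : ℕ → H),
    Coalgebra.comul (R := k) h = ∑ i ∈ s, p i ⊗ₜ[k] q i →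
    act h (a * b) = ∑ i ∈ s, act (p i) a * act (q i) b) ∧
  (∀ h : H, act h 1 = Coalgebra.counit (R := k) h • (1 : A)) ∧
  (coact 1 = (1 : A) ⊗ₜ[k] (1 : H)) ∧
  (∀ (a b : A) (s t : Finset ℕ) (a₀ : ℕ → A) (a₁ : ℕ → H) (b₀ : ℕ → A) (b₁ : ℕ → H),
    coact a = ∑ i ∈ s, a₀ i ⊗ₜ[k] a₁ i →
    coact b = ∑ j ∈ t, b₀ j ⊗ₜ[k] b₁ j →
    coact (a * b) = ∑ i ∈ s, ∑ j ∈ t, (a₀ i * b₀ j) ⊗ₜ[k] (b₁ j * a₁ i))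

/-- Characterization of the smash product multiplication
`(a # b)(a' # b') = a a'₍₀₎ # (a'₍₁₎ · b) b'` on `A ⊗ B`. -/
def SmashMulChar {A B : Type} [Ring A] [Algebra k A] [Ring B] [Algebra k B]
    (actB : H →ₗ[k] B →ₗ[k] B) (coactA : A →ₗ[k] A ⊗[k] H)
    (mul : (A ⊗[k] B) →ₗ[k] (A ⊗[k] B) →ₗ[k] (A ⊗[k] B)) : Prop :=
  ∀ (a a' : A) (b b' : B) (t : Finset ℕ) (a₀ : ℕ → A) (a₁ : ℕ → H),
    coactA a' = ∑ j ∈ t, a₀ j ⊗ₜ[k] a₁ j →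
    mul (a ⊗ₜ[k] b) (a' ⊗ₜ[k] b') = ∑ j ∈ t, (a * a₀ j) ⊗ₜ[k] (actB (a₁ j) b * b')

end GYD

/-!
`Ψ` is `dualDistrib` up to swapping the two factors, hence an isomorphism in finite dimension.
`H`-linearity is a termwise comparison after expanding both actions along `Δ h`; it rests on the
antipode being an anti-coalgebra map, `Δ (S h) = S h₂ ⊗ S h₁`, and commuting with Hopf
automorphisms. `H`-colinearity is checked by contracting both coactions against `m ⊗ n`: each side
becomes `f (m₍₀₎) g (n₍₀₎) S⁻¹(m₍₁₎) S⁻¹(n₍₁₎)`, because `S⁻¹` is anti-multiplicative.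
-/

open Coalgebra HopfAlgebra WithConv

namespace HopfAlgebra

variable {R A : Type*} [CommSemiring R] [Semiring A] [HopfAlgebra R A]

theorem sum_antipode_tmul_one_mul_comul {a : A} {ι : Type*} (𝓡 : Repr R a ι) :
    ∑ i ∈ 𝓡.index, (antipode R (𝓡.left i) ⊗ₜ[R] (1 : A)) * comul (𝓡.right i) = 1 ⊗ₜ a := by
  let T : A ⊗[R] (A ⊗[R] A) →ₗ[R] A ⊗[R] A :=
    LinearMap.rTensor A (LinearMap.mul' R A ∘ₗ LinearMap.rTensor A (antipode R)) ∘ₗ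
      (TensorProduct.assoc R A A A).symm.toLinearMap
  have hT (x y z : A) : T (x ⊗ₜ (y ⊗ₜ z)) = (antipode R x * y) ⊗ₜ z := by simp [T]
  have := congr(T $(sum_tmul_tmul_eq 𝓡 (fun i ↦ ℛ R (𝓡.left i)) (fun i ↦ ℛ R (𝓡.right i))))
  simp only [map_sum, hT, ← sum_tmul, sum_antipode_mul_eq_smul, smul_tmul] at this
  simp only [← (ℛ R (𝓡.right _)).eq, Finset.mul_sum, Algebra.TensorProduct.tmul_mul_tmul, one_mul,
    ← this, ← tmul_sum, sum_counit_smul]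

/-- Both sides are convolution inverses of `comul` in `A →ₗ[R] A ⊗[R] A`. -/
theorem comul_antipode (a : A) :
    comul (R := R) (antipode R a) =
      map (antipode R) (antipode R) (TensorProduct.comm R A A (comul a)) := by
  let G : A →ₗ[R] A ⊗[R] A :=
    map (antipode R) (antipode R) ∘ₗ (TensorProduct.comm R A A).toLinearMap ∘ₗ comul
  suffices hG : toConv G * toConv comul = 1 from
    congr($(left_inv_eq_right_inv hG LinearMap.comul_right_inv).ofConv a).symm
  let Ξ : A ⊗[R] (A ⊗[R] A) →ₗ[R] A ⊗[R] A :=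
    LinearMap.mul' R (A ⊗[R] A) ∘ₗ
      map ((TensorProduct.comm R A A).toLinearMap ∘ₗ map (antipode R) (antipode R)) comul ∘ₗ
      (TensorProduct.assoc R A A A).symm.toLinearMap
  have hΞ (x y z : A) : Ξ (x ⊗ₜ (y ⊗ₜ z)) =
      (1 ⊗ₜ antipode R x) * ((antipode R y ⊗ₜ[R] 1) * comul z) := by
    simp [Ξ, ← mul_assoc]
  ext a
  have := congr(Ξ $(sum_tmul_tmul_eq (ℛ R a) (fun i ↦ ℛ R ((ℛ R a).left i))
    (fun i ↦ ℛ R ((ℛ R a).right i))))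
  simp only [map_sum, hΞ, ← Finset.mul_sum, sum_antipode_tmul_one_mul_comul] at this
  rw [(ℛ R a).convMul_apply]
  refine (Finset.sum_congr rfl fun i _ ↦ ?_).trans (this.trans ?_)
  · simp [G, ← (ℛ R ((ℛ R a).left _)).eq, Finset.sum_mul, ← mul_assoc]
  · simp [← tmul_sum, sum_antipode_mul_eq_smul, Algebra.algebraMap_eq_smul_one,
      Algebra.TensorProduct.one_def]

end HopfAlgebra

/-- `antipode ∘ φ` and `φ ∘ antipode` are a left and a right convolution inverse of `φ`. -/
theorem BialgHom.map_antipode {R A B : Type*} [CommSemiring R] [Semiring A] [HopfAlgebra R A]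
    [Semiring B] [HopfAlgebra R B] (φ : A →ₐc[R] B) (a : A) :
    φ (antipode R a) = antipode R (φ a) := by
  have hleft : toConv (antipode R ∘ₗ (φ : A →ₗ[R] B)) * toConv (φ : A →ₗ[R] B) = 1 := by
    ext a
    rw [(ℛ R a).convMul_apply]
    simpa using sum_antipode_mul_eq_algebraMap_counit ((ℛ R a).induced φ)
  have hright : toConv (φ : A →ₗ[R] B) * toConv ((φ : A →ₗ[R] B) ∘ₗ antipode R) = 1 := by
    ext a
    rw [(ℛ R a).convMul_apply]
    simpa [← map_mul, ← map_sum, AlgHomClass.commutes] using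
      congr(φ $(sum_mul_antipode_eq_algebraMap_counit (ℛ R a)))
  exact congr($(left_inv_eq_right_inv hleft hright).ofConv a).symm

namespace TensorProduct

variable {R M N : Type*} [CommSemiring R] [AddCommMonoid M] [Module R M] [AddCommMonoid N]
  [Module R N]

theorem exists_finset_nat_sum_tmul_eq (x : M ⊗[R] N) :
    ∃ (s : Finset ℕ) (m : ℕ → M) (n : ℕ → N), x = ∑ i ∈ s, m i ⊗ₜ n i := by
  obtain ⟨l, m, n, rfl⟩ := exists_sum_tmul_eq x
  refine ⟨Finset.range l, fun i ↦ if h : i < l then m ⟨i, h⟩ else 0,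
    fun i ↦ if h : i < l then n ⟨i, h⟩ else 0, ?_⟩
  simp [Finset.sum_range]

theorem lid_rTensor_dual_eval (z : Module.Dual R M ⊗[R] N) (m : M) :
    TensorProduct.lid R N (LinearMap.rTensor N (Module.Dual.eval R M m) z) =
      dualTensorHom R M N z m := by
  induction z using TensorProduct.induction_on with
  | zero => simp
  | tmul f n => simp
  | add x y hx hy => simp only [map_add, LinearMap.add_apply, hx, hy]

end TensorProduct

namespace GYD

variable {k H : Type} [Field k] [Ring H] [HopfAlgebra k H]

theorem IsHopfAut.symm {φ : H ≃ₗ[k] H} (hφ : IsHopfAut k H φ) : IsHopfAut k H φ.symm := by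
  obtain ⟨hmul, hone, hcomul, hcounit⟩ := hφ
  refine ⟨fun x y ↦ φ.injective ?_, φ.injective ?_, fun h ↦ ?_, fun h ↦ ?_⟩
  · simp [hmul]
  · simp [hone]
  · have := hcomul (φ.symm h)
    rw [φ.apply_symm_apply] at this
    rw [this, ← LinearMap.comp_apply, ← map_comp]
    simp
  · simpa using (hcounit (φ.symm h)).symm

def IsHopfAut.toBialgHom {φ : H ≃ₗ[k] H} (hφ : IsHopfAut k H φ) : H →ₐc[k] H where
  toLinearMap := φ.toLinearMap
  counit_comp := LinearMap.ext hφ.2.2.2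
  map_comp_comul := LinearMap.ext fun h ↦ (hφ.2.2.1 h).symm
  map_one' := hφ.2.1
  map_mul' := hφ.1

theorem IsHopfAut.antipode_apply {φ : H ≃ₗ[k] H} (hφ : IsHopfAut k H φ) (h : H) :
    antipode k (φ h) = φ (antipode k h) :=
  (hφ.toBialgHom.map_antipode h).symm

/-- The antipode with inverse `Sinv`; its `symm` is `Sinv` as a linear map. -/
def IsAntipodeInv.antipodeEquiv {Sinv : H → H} (hS : IsAntipodeInv k H Sinv) : H ≃ₗ[k] H :=
  { antipode k with invFun := Sinv, left_inv := hS.2, right_inv := hS.1 }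

theorem IsAntipodeInv.map_mul {Sinv : H → H} (hS : IsAntipodeInv k H Sinv) (a b : H) :
    Sinv (a * b) = Sinv b * Sinv a := by
  rw [← hS.1 a, ← hS.1 b, ← antipode_mul_antidistrib, hS.2, hS.2, hS.2]

theorem DualCoactChar.dualTensorHom_apply {M : Type} [AddCommGroup M] [Module k M]
    {σ : H →ₗ[k] H} {coactM : M →ₗ[k] M ⊗[k] H}
    {coactD : Module.Dual k M →ₗ[k] Module.Dual k M ⊗[k] H}
    (hD : DualCoactChar k H σ coactM coactD) (f : Module.Dual k M) (m : M) :
    dualTensorHom k M H (coactD f) m = TensorProduct.lid k H (map f σ (coactM m)) := by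
  obtain ⟨t, m₀, m₁, hm⟩ := exists_finset_nat_sum_tmul_eq (coactM m)
  rw [← lid_rTensor_dual_eval, hD f m t m₀ m₁ hm, hm]
  simp

variable {M N : Type} [AddCommGroup M] [Module k M] [AddCommGroup N] [Module k N]

theorem eq_dualDistrib_comp_comm
    {Ψ : Module.Dual k N ⊗[k] Module.Dual k M →ₗ[k] Module.Dual k (M ⊗[k] N)}
    (hΨ : ∀ (g : Module.Dual k N) (f : Module.Dual k M) (m : M) (n : N),
      Ψ (g ⊗ₜ[k] f) (m ⊗ₜ[k] n) = f m * g n) :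
    Ψ = dualDistrib k M N ∘ₗ (TensorProduct.comm k _ _).toLinearMap :=
  TensorProduct.ext' fun g f ↦ TensorProduct.ext' fun m n ↦ by simp [hΨ]

theorem dualTensor_bijective [FiniteDimensional k M] [FiniteDimensional k N]
    {Ψ : Module.Dual k N ⊗[k] Module.Dual k M →ₗ[k] Module.Dual k (M ⊗[k] N)}
    (hΨ : ∀ (g : Module.Dual k N) (f : Module.Dual k M) (m : M) (n : N),
      Ψ (g ⊗ₜ[k] f) (m ⊗ₜ[k] n) = f m * g n) :
    Function.Bijective Ψ := by
  rw [eq_dualDistrib_comp_comm hΨ]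
  exact (dualDistribEquiv k M N).bijective.comp (TensorProduct.comm k _ _).bijective

theorem dualTensor_map_act {α β γ δ : H ≃ₗ[k] H}
    (hα : IsHopfAut k H α) (hβ : IsHopfAut k H β) (hγ : IsHopfAut k H γ) (hδ : IsHopfAut k H δ)
    {actM : H →ₗ[k] M →ₗ[k] M} {actN : H →ₗ[k] N →ₗ[k] N}
    {actNs : H →ₗ[k] Module.Dual k N →ₗ[k] Module.Dual k N}
    (hactNs : DualActChar k H
      (fun h => δ.symm (γ.symm (antipode k h))) actN actNs)
    {actMs : H →ₗ[k] Module.Dual k M →ₗ[k] Module.Dual k M}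
    (hactMs : DualActChar k H
      (fun h => β.symm (α.symm (antipode k h))) actM actMs)
    {actDom : H →ₗ[k] (Module.Dual k N ⊗[k] Module.Dual k M)
        →ₗ[k] (Module.Dual k N ⊗[k] Module.Dual k M)}
    (hactDom : TensorActChar k H ⇑α.symm
      (fun h => α (γ (δ.symm (γ.symm (α.symm h))))) actNs actMs actDom)
    {actT : H →ₗ[k] (M ⊗[k] N) →ₗ[k] (M ⊗[k] N)}
    (hactT : TensorActChar k H ⇑γ (fun h => γ.symm (β (γ h))) actM actN actT)
    {actCod : H →ₗ[k] Module.Dual k (M ⊗[k] N) →ₗ[k] Module.Dual k (M ⊗[k] N)}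
    (hactCod : DualActChar k H
      (fun h => γ.symm (β.symm (γ (δ.symm (γ.symm (α.symm (antipode k h))))))) actT actCod)
    {Ψ : Module.Dual k N ⊗[k] Module.Dual k M →ₗ[k] Module.Dual k (M ⊗[k] N)}
    (hΨ : ∀ (g : Module.Dual k N) (f : Module.Dual k M) (m : M) (n : N),
      Ψ (g ⊗ₜ[k] f) (m ⊗ₜ[k] n) = f m * g n)
    (h : H) (x : Module.Dual k N ⊗[k] Module.Dual k M) :
    Ψ (actDom h x) = actCod h (Ψ x) := by
  induction x using TensorProduct.induction_on with
  | zero => simp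
  | add x y hx hy => simp only [map_add, hx, hy]
  | tmul g f =>
    obtain ⟨s, p, q, hpq⟩ := exists_finset_nat_sum_tmul_eq (comul (R := k) h)
    have hΔ : comul (R := k) (γ.symm (β.symm (γ (δ.symm (γ.symm (α.symm (antipode k h))))))) =
        ∑ i ∈ s, γ.symm (β.symm (γ (δ.symm (γ.symm (α.symm (antipode k (q i))))))) ⊗ₜ
          γ.symm (β.symm (γ (δ.symm (γ.symm (α.symm (antipode k (p i))))))) := by
      simp only [hα.symm.2.2.1, hβ.symm.2.2.1, hγ.2.2.1, hγ.symm.2.2.1, hδ.symm.2.2.1,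
        comul_antipode, hpq, map_sum, comm_tmul, map_tmul, LinearEquiv.coe_coe]
    refine TensorProduct.ext' fun m n ↦ ?_
    rw [hactDom h g f s p q hpq, hactCod, hactT _ m n s _ _ hΔ, map_sum, map_sum,
      LinearMap.sum_apply]
    refine Finset.sum_congr rfl fun i _ ↦ ?_
    rw [hΨ, hΨ, hactMs, hactNs]
    simp only [hα.antipode_apply, hγ.antipode_apply, hα.symm.antipode_apply,
      hγ.symm.antipode_apply, hδ.symm.antipode_apply, LinearEquiv.apply_symm_apply,
      LinearEquiv.symm_apply_apply]

theorem dualTensorHom_rTensor_coact_tmul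
    {coactNs : Module.Dual k N →ₗ[k] Module.Dual k N ⊗[k] H}
    {coactMs : Module.Dual k M →ₗ[k] Module.Dual k M ⊗[k] H}
    {coactDom : Module.Dual k N ⊗[k] Module.Dual k M
        →ₗ[k] (Module.Dual k N ⊗[k] Module.Dual k M) ⊗[k] H}
    (hcoactDom : TensorCoactChar k H coactNs coactMs coactDom)
    {Ψ : Module.Dual k N ⊗[k] Module.Dual k M →ₗ[k] Module.Dual k (M ⊗[k] N)}
    (hΨ : ∀ (g : Module.Dual k N) (f : Module.Dual k M) (m : M) (n : N),
      Ψ (g ⊗ₜ[k] f) (m ⊗ₜ[k] n) = f m * g n)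
    (g : Module.Dual k N) (f : Module.Dual k M) (m : M) (n : N) :
    dualTensorHom k (M ⊗[k] N) H (LinearMap.rTensor H Ψ (coactDom (g ⊗ₜ f))) (m ⊗ₜ n) =
      dualTensorHom k M H (coactMs f) m * dualTensorHom k N H (coactNs g) n := by
  obtain ⟨s, g₀, g₁, hg⟩ := exists_finset_nat_sum_tmul_eq (coactNs g)
  obtain ⟨t, f₀, f₁, hf⟩ := exists_finset_nat_sum_tmul_eq (coactMs f)
  rw [hcoactDom g f s t g₀ g₁ f₀ f₁ hg hf, hg, hf]
  simp only [map_sum, LinearMap.rTensor_tmul, LinearMap.sum_apply, dualTensorHom_apply, hΨ,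
    Finset.sum_mul_sum, smul_mul_smul_comm]
  exact Finset.sum_comm

theorem lid_map_coact_tmul {σ : H →ₗ[k] H} (hσ : ∀ a b, σ (a * b) = σ b * σ a)
    {coactM : M →ₗ[k] M ⊗[k] H} {coactN : N →ₗ[k] N ⊗[k] H}
    {coactT : M ⊗[k] N →ₗ[k] (M ⊗[k] N) ⊗[k] H}
    (hcoactT : TensorCoactChar k H coactM coactN coactT)
    {Ψ : Module.Dual k N ⊗[k] Module.Dual k M →ₗ[k] Module.Dual k (M ⊗[k] N)}
    (hΨ : ∀ (g : Module.Dual k N) (f : Module.Dual k M) (m : M) (n : N),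
      Ψ (g ⊗ₜ[k] f) (m ⊗ₜ[k] n) = f m * g n)
    (g : Module.Dual k N) (f : Module.Dual k M) (m : M) (n : N) :
    TensorProduct.lid k H (map (Ψ (g ⊗ₜ f)) σ (coactT (m ⊗ₜ n))) =
      TensorProduct.lid k H (map f σ (coactM m)) *
        TensorProduct.lid k H (map g σ (coactN n)) := by
  obtain ⟨s, m₀, m₁, hm⟩ := exists_finset_nat_sum_tmul_eq (coactM m)
  obtain ⟨t, n₀, n₁, hn⟩ := exists_finset_nat_sum_tmul_eq (coactN n)
  rw [hcoactT m n s t m₀ m₁ n₀ n₁ hm hn, hm, hn]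
  simp only [map_sum, map_tmul, TensorProduct.lid_tmul, hΨ, hσ, Finset.sum_mul_sum,
    smul_mul_smul_comm]

theorem dualTensor_coact_map [FiniteDimensional k M] [FiniteDimensional k N]
    {Sinv : H → H} (hS : IsAntipodeInv k H Sinv)
    {coactM : M →ₗ[k] M ⊗[k] H} {coactN : N →ₗ[k] N ⊗[k] H}
    {coactNs : Module.Dual k N →ₗ[k] Module.Dual k N ⊗[k] H}
    (hcoactNs : DualCoactChar k H Sinv coactN coactNs)
    {coactMs : Module.Dual k M →ₗ[k] Module.Dual k M ⊗[k] H}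
    (hcoactMs : DualCoactChar k H Sinv coactM coactMs)
    {coactDom : Module.Dual k N ⊗[k] Module.Dual k M
        →ₗ[k] (Module.Dual k N ⊗[k] Module.Dual k M) ⊗[k] H}
    (hcoactDom : TensorCoactChar k H coactNs coactMs coactDom)
    {coactT : M ⊗[k] N →ₗ[k] (M ⊗[k] N) ⊗[k] H}
    (hcoactT : TensorCoactChar k H coactM coactN coactT)
    {coactCod : Module.Dual k (M ⊗[k] N) →ₗ[k] Module.Dual k (M ⊗[k] N) ⊗[k] H}
    (hcoactCod : DualCoactChar k H Sinv coactT coactCod)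
    {Ψ : Module.Dual k N ⊗[k] Module.Dual k M →ₗ[k] Module.Dual k (M ⊗[k] N)}
    (hΨ : ∀ (g : Module.Dual k N) (f : Module.Dual k M) (m : M) (n : N),
      Ψ (g ⊗ₜ[k] f) (m ⊗ₜ[k] n) = f m * g n)
    (x : Module.Dual k N ⊗[k] Module.Dual k M) :
    coactCod (Ψ x) = LinearMap.rTensor H Ψ (coactDom x) := by
  let σ : H →ₗ[k] H := hS.antipodeEquiv.symm.toLinearMap
  induction x using TensorProduct.induction_on with
  | zero => simp
  | add x y hx hy => simp only [map_add, hx, hy]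
  | tmul g f =>
    refine (dualTensorHom_bijective ..).injective (TensorProduct.ext' fun m n ↦ ?_)
    rw [dualTensorHom_rTensor_coact_tmul hcoactDom hΨ, hcoactCod.dualTensorHom_apply (σ := σ),
      hcoactMs.dualTensorHom_apply (σ := σ), hcoactNs.dualTensorHom_apply (σ := σ)]
    exact lid_map_coact_tmul hS.map_mul hcoactT hΨ g f m n

end GYD

theorem statement_6_general
    (k H : Type) [Field k] [Ring H] [HopfAlgebra k H]
    (Sinv : H → H) (hS : GYD.IsAntipodeInv k H Sinv)
    (α β γ δ : H ≃ₗ[k] H)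
    (hα : GYD.IsHopfAut k H α) (hβ : GYD.IsHopfAut k H β)
    (hγ : GYD.IsHopfAut k H γ) (hδ : GYD.IsHopfAut k H δ)
    (M N : Type) [AddCommGroup M] [Module k M] [AddCommGroup N] [Module k N]
    [FiniteDimensional k M] [FiniteDimensional k N]
    (actM : H →ₗ[k] M →ₗ[k] M) (coactM : M →ₗ[k] M ⊗[k] H)
    (actN : H →ₗ[k] N →ₗ[k] N) (coactN : N →ₗ[k] N ⊗[k] H)
    -- the left dual N^* of N, an (γ⁻¹, γδ⁻¹γ⁻¹)-Yetter-Drinfeld module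
    (actNs : H →ₗ[k] Module.Dual k N →ₗ[k] Module.Dual k N)
    (coactNs : Module.Dual k N →ₗ[k] Module.Dual k N ⊗[k] H)
    (hactNs : GYD.DualActChar k H
      (fun h => δ.symm (γ.symm (HopfAlgebra.antipode (R := k) h))) actN actNs)
    (hcoactNs : GYD.DualCoactChar k H Sinv coactN coactNs)
    -- the left dual M^* of M, an (α⁻¹, αβ⁻¹α⁻¹)-Yetter-Drinfeld module
    (actMs : H →ₗ[k] Module.Dual k M →ₗ[k] Module.Dual k M)
    (coactMs : Module.Dual k M →ₗ[k] Module.Dual k M ⊗[k] H)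
    (hactMs : GYD.DualActChar k H
      (fun h => β.symm (α.symm (HopfAlgebra.antipode (R := k) h))) actM actMs)
    (hcoactMs : GYD.DualCoactChar k H Sinv coactM coactMs)
    -- N^* ⊗̂ M^*
    (actDom : H →ₗ[k] (Module.Dual k N ⊗[k] Module.Dual k M)
        →ₗ[k] (Module.Dual k N ⊗[k] Module.Dual k M))
    (coactDom : Module.Dual k N ⊗[k] Module.Dual k M
        →ₗ[k] (Module.Dual k N ⊗[k] Module.Dual k M) ⊗[k] H)
    (hactDom : GYD.TensorActChar k H ⇑α.symm
      (fun h => α (γ (δ.symm (γ.symm (α.symm h))))) actNs actMs actDom)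
    (hcoactDom : GYD.TensorCoactChar k H coactNs coactMs coactDom)
    -- M ⊗̂ N, an (αγ, δγ⁻¹βγ)-Yetter-Drinfeld module
    (actT : H →ₗ[k] (M ⊗[k] N) →ₗ[k] (M ⊗[k] N))
    (coactT : M ⊗[k] N →ₗ[k] (M ⊗[k] N) ⊗[k] H)
    (hactT : GYD.TensorActChar k H ⇑γ (fun h => γ.symm (β (γ h))) actM actN actT)
    (hcoactT : GYD.TensorCoactChar k H coactM coactN coactT)
    -- the left dual (M ⊗̂ N)^*
    (actCod : H →ₗ[k] Module.Dual k (M ⊗[k] N) →ₗ[k] Module.Dual k (M ⊗[k] N))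
    (coactCod : Module.Dual k (M ⊗[k] N) →ₗ[k] Module.Dual k (M ⊗[k] N) ⊗[k] H)
    (hactCod : GYD.DualActChar k H
      (fun h => γ.symm (β.symm (γ (δ.symm (γ.symm (α.symm
        (HopfAlgebra.antipode (R := k) h))))))) actT actCod)
    (hcoactCod : GYD.DualCoactChar k H Sinv coactT coactCod)
    -- the map Ψ
    (Ψ : Module.Dual k N ⊗[k] Module.Dual k M →ₗ[k] Module.Dual k (M ⊗[k] N))
    (hΨ : ∀ (g : Module.Dual k N) (f : Module.Dual k M) (m : M) (n : N),
        Ψ (g ⊗ₜ[k] f) (m ⊗ₜ[k] n) = f m * g n) :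
    Function.Bijective Ψ ∧
    (∀ (h : H) (x : Module.Dual k N ⊗[k] Module.Dual k M), Ψ (actDom h x) = actCod h (Ψ x)) ∧
    (∀ x : Module.Dual k N ⊗[k] Module.Dual k M,
        coactCod (Ψ x) = LinearMap.rTensor H Ψ (coactDom x)) :=
  ⟨GYD.dualTensor_bijective hΨ,
    GYD.dualTensor_map_act hα hβ hγ hδ hactNs hactMs hactDom hactT hactCod hΨ,
    GYD.dualTensor_coact_map hS hcoactNs hcoactMs hcoactDom hcoactT hcoactCod hΨ⟩

theorem statement_6
    (k H : Type) [Field k] [Ring H] [HopfAlgebra k H]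
    (Sinv : H → H) (hS : GYD.IsAntipodeInv k H Sinv)
    (α β γ δ : H ≃ₗ[k] H)
    (hα : GYD.IsHopfAut k H α) (hβ : GYD.IsHopfAut k H β)
    (hγ : GYD.IsHopfAut k H γ) (hδ : GYD.IsHopfAut k H δ)
    (M N : Type) [AddCommGroup M] [Module k M] [AddCommGroup N] [Module k N]
    [FiniteDimensional k M] [FiniteDimensional k N]
    (actM : H →ₗ[k] M →ₗ[k] M) (coactM : M →ₗ[k] M ⊗[k] H)
    (actN : H →ₗ[k] N →ₗ[k] N) (coactN : N →ₗ[k] N ⊗[k] H)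
    (hM : GYD.IsYD k H Sinv ⇑α ⇑β actM coactM)
    (hN : GYD.IsYD k H Sinv ⇑γ ⇑δ actN coactN)
    -- the left dual N^* of N, an (γ⁻¹, γδ⁻¹γ⁻¹)-Yetter-Drinfeld module
    (actNs : H →ₗ[k] Module.Dual k N →ₗ[k] Module.Dual k N)
    (coactNs : Module.Dual k N →ₗ[k] Module.Dual k N ⊗[k] H)
    (hactNs : GYD.DualActChar k H
      (fun h => δ.symm (γ.symm (HopfAlgebra.antipode (R := k) h))) actN actNs)
    (hcoactNs : GYD.DualCoactChar k H Sinv coactN coactNs)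
    -- the left dual M^* of M, an (α⁻¹, αβ⁻¹α⁻¹)-Yetter-Drinfeld module
    (actMs : H →ₗ[k] Module.Dual k M →ₗ[k] Module.Dual k M)
    (coactMs : Module.Dual k M →ₗ[k] Module.Dual k M ⊗[k] H)
    (hactMs : GYD.DualActChar k H
      (fun h => β.symm (α.symm (HopfAlgebra.antipode (R := k) h))) actM actMs)
    (hcoactMs : GYD.DualCoactChar k H Sinv coactM coactMs)
    -- N^* ⊗̂ M^*
    (actDom : H →ₗ[k] (Module.Dual k N ⊗[k] Module.Dual k M)
        →ₗ[k] (Module.Dual k N ⊗[k] Module.Dual k M))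
    (coactDom : Module.Dual k N ⊗[k] Module.Dual k M
        →ₗ[k] (Module.Dual k N ⊗[k] Module.Dual k M) ⊗[k] H)
    (hactDom : GYD.TensorActChar k H ⇑α.symm
      (fun h => α (γ (δ.symm (γ.symm (α.symm h))))) actNs actMs actDom)
    (hcoactDom : GYD.TensorCoactChar k H coactNs coactMs coactDom)
    -- M ⊗̂ N, an (αγ, δγ⁻¹βγ)-Yetter-Drinfeld module
    (actT : H →ₗ[k] (M ⊗[k] N) →ₗ[k] (M ⊗[k] N))
    (coactT : M ⊗[k] N →ₗ[k] (M ⊗[k] N) ⊗[k] H)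
    (hactT : GYD.TensorActChar k H ⇑γ (fun h => γ.symm (β (γ h))) actM actN actT)
    (hcoactT : GYD.TensorCoactChar k H coactM coactN coactT)
    -- the left dual (M ⊗̂ N)^*
    (actCod : H →ₗ[k] Module.Dual k (M ⊗[k] N) →ₗ[k] Module.Dual k (M ⊗[k] N))
    (coactCod : Module.Dual k (M ⊗[k] N) →ₗ[k] Module.Dual k (M ⊗[k] N) ⊗[k] H)
    (hactCod : GYD.DualActChar k H
      (fun h => γ.symm (β.symm (γ (δ.symm (γ.symm (α.symm
        (HopfAlgebra.antipode (R := k) h))))))) actT actCod)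
    (hcoactCod : GYD.DualCoactChar k H Sinv coactT coactCod)
    -- the map Ψ
    (Ψ : Module.Dual k N ⊗[k] Module.Dual k M →ₗ[k] Module.Dual k (M ⊗[k] N))
    (hΨ : ∀ (g : Module.Dual k N) (f : Module.Dual k M) (m : M) (n : N),
        Ψ (g ⊗ₜ[k] f) (m ⊗ₜ[k] n) = f m * g n) :
    Function.Bijective Ψ ∧
    (∀ (h : H) (x : Module.Dual k N ⊗[k] Module.Dual k M), Ψ (actDom h x) = actCod h (Ψ x)) ∧
    (∀ x : Module.Dual k N ⊗[k] Module.Dual k M,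
        coactCod (Ψ x) = LinearMap.rTensor H Ψ (coactDom x)) :=
  statement_6_general k H Sinv hS α β γ δ hα hβ hγ hδ M N actM coactM actN coactN actNs coactNs
    hactNs hcoactNs actMs coactMs hactMs hcoactMs actDom coactDom hactDom hcoactDom actT coactT
    hactT hcoactT actCod coactCod hactCod hcoactCod Ψ hΨ
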